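/- Let λ''(0) < 0, μ > 0, μ_* > 0, σ ∈ (0,2], k_* > 0. Then there is a constant C > 0 such that for all ε ∈ (0,1) and all k with |k| ≤ k_*/ε: (ε|k|)^{σ+2} / [(-(1/2)λ''(0)ε² + μ_*ε²k²)(1 + k²)] ≤ C·ε^σ. -/

import Mathlib

open Real

lemma abs_rpow_le_one_add_sq_sq {p : ℝ} (hp₀ : 0 ≤ p) (hp₄ : p ≤ 4) (k : ℝ) :
    |k| ^ p ≤ (1 + k ^ 2) ^ 2 := by
  have h_abs : |k| ^ p = (k ^ 2) ^ (p / 2) := by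
    rw [← sq_abs, ← rpow_two, ← rpow_mul (abs_nonneg k)]
    ring_nf
  calc |k| ^ p = (k ^ 2) ^ (p / 2) := h_abs
    _ ≤ (1 + k ^ 2) ^ (p / 2) := by gcongr; linarith
    _ ≤ (1 + k ^ 2) ^ (2 : ℝ) := by
        apply rpow_le_rpow_of_exponent_le (by nlinarith [sq_nonneg k]) (by linarith)
    _ = (1 + k ^ 2) ^ 2 := rpow_two _

lemma min_mul_one_add_sq_le (a b k : ℝ) : min a b * (1 + k ^ 2) ≤ a + b * k ^ 2 := by
  nlinarith [min_le_left a b, min_le_right a b, sq_nonneg k]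

/-- The exponent `σ + 2 ≤ 4` never exceeds the degree of the denominator in `k`, and the factor
`ε ^ 2` of the denominator cancels against the numerator, leaving `ε ^ σ`. -/
lemma rpow_div_quadratic_mul_one_add_sq_le {a b σ ε : ℝ} (ha : 0 < a) (hb : 0 < b)
    (hσ₀ : -2 ≤ σ) (hσ₂ : σ ≤ 2) (hε : 0 < ε) (k : ℝ) :
    (ε * |k|) ^ (σ + 2) / ((a * ε ^ 2 + b * ε ^ 2 * k ^ 2) * (1 + k ^ 2)) ≤
      (min a b)⁻¹ * ε ^ σ := by
  have hc : 0 < min a b := lt_min ha hb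
  have h_num : (ε * |k|) ^ (σ + 2) = ε ^ σ * ε ^ 2 * |k| ^ (σ + 2) := by
    rw [mul_rpow hε.le (abs_nonneg k), rpow_add hε, rpow_two]
  have h_den : (1 + k ^ 2) ^ 2 ≤ (min a b)⁻¹ * ((a + b * k ^ 2) * (1 + k ^ 2)) := by
    rw [le_inv_mul_iff₀ hc, sq, ← mul_assoc]
    gcongr
    exact min_mul_one_add_sq_le a b k
  rw [div_le_iff₀ (by positivity), h_num]
  calc ε ^ σ * ε ^ 2 * |k| ^ (σ + 2)
      ≤ ε ^ σ * ε ^ 2 * (1 + k ^ 2) ^ 2 := by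
        gcongr; exact abs_rpow_le_one_add_sq_sq (by linarith) (by linarith) k
    _ ≤ ε ^ σ * ε ^ 2 * ((min a b)⁻¹ * ((a + b * k ^ 2) * (1 + k ^ 2))) := by gcongr
    _ = (min a b)⁻¹ * ε ^ σ * ((a * ε ^ 2 + b * ε ^ 2 * k ^ 2) * (1 + k ^ 2)) := by ring

theorem stmt_11_general (l2 μstar σ kstar : ℝ)
    (hl2 : l2 < 0) (hμstar : 0 < μstar)
    (hσ : 0 < σ ∧ σ ≤ 2) :
    ∃ C > 0, ∀ ε : ℝ, 0 < ε → ε < 1 → ∀ k : ℝ, |k| ≤ kstar / ε →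
      (ε * |k|) ^ (σ + 2) /
        ((-(1 / 2) * l2 * ε ^ 2 + μstar * ε ^ 2 * k ^ 2) * (1 + k ^ 2)) ≤ C * ε ^ σ := by
  have ha : 0 < -(1 / 2) * l2 := by linarith
  refine ⟨(min (-(1 / 2) * l2) μstar)⁻¹, inv_pos.mpr (lt_min ha hμstar), ?_⟩
  intro ε hε _ k _
  exact rpow_div_quadratic_mul_one_add_sq_le ha hμstar (by linarith [hσ.1]) hσ.2 hε k

theorem stmt_11 (l2 μ μstar σ kstar : ℝ)
    (hl2 : l2 < 0) (hμ : 0 < μ) (hμstar : 0 < μstar)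
    (hσ : 0 < σ ∧ σ ≤ 2) (hk : 0 < kstar) :
    ∃ C > 0, ∀ ε : ℝ, 0 < ε → ε < 1 → ∀ k : ℝ, |k| ≤ kstar / ε →
      (ε * |k|) ^ (σ + 2) /
        ((-(1 / 2) * l2 * ε ^ 2 + μstar * ε ^ 2 * k ^ 2) * (1 + k ^ 2)) ≤ C * ε ^ σ :=
  stmt_11_general l2 μstar σ kstar hl2 hμstar hσ
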